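/- arXiv:2011.02710 — 3 statements merged into one kernel-verified Lean document; each statement's English description precedes it below -/
import Mathlib

section
/- Let μ be a positive Borel measure on ℝ with ∫ exp(δ|x|) dμ < ∞ for some δ > 0. If f, g ∈ L²(μ) are nonnegative-measure densities with the same moments, i.e. ∫ x^n f(x) dμ(x) = ∫ x^n g(x) dμ(x) for all n ≥ 0, then f = g μ-almost everywhere. -/
/-!
The finite measures `μ.withDensity f` and `μ.withDensity g` have exponential moments near `0`,
by Cauchy–Schwarz against `exp (δ / 2 * |x|) ∈ L²(μ)`. Their complex moment generating functions
are therefore analytic on a vertical strip containing the imaginary axis, and their Taylor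
coefficients at `0` are the common moments; by the identity theorem they agree on the whole strip.
On the imaginary axis they are the characteristic functions, so the two measures coincide, i.e.
`f = g` almost everywhere.
-/

open MeasureTheory Real ProbabilityTheory Filter Topology

theorem AnalyticAt.eventuallyEq_of_iteratedDeriv_eq {𝕜 : Type*} [NontriviallyNormedField 𝕜]
    [CompleteSpace 𝕜] [CharZero 𝕜] {F G : 𝕜 → 𝕜} {z : 𝕜} (hF : AnalyticAt 𝕜 F z)
    (hG : AnalyticAt 𝕜 G z) (h : ∀ n, iteratedDeriv n F z = iteratedDeriv n G z) :
    F =ᶠ[𝓝 z] G := by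
  have hF' := hF.hasFPowerSeriesAt
  simp_rw [h] at hF'
  have hsub := hF'.sub hG.hasFPowerSeriesAt
  rw [sub_self] at hsub
  filter_upwards [hsub.eventually_eq_zero] with w hw
  exact sub_eq_zero.mp hw

theorem MeasureTheory.Measure.ext_of_moments {ν ν' : Measure ℝ} [IsFiniteMeasure ν]
    [IsFiniteMeasure ν'] (hν : 0 ∈ interior (integrableExpSet id ν))
    (hν' : 0 ∈ interior (integrableExpSet id ν'))
    (hmom : ∀ n : ℕ, ∫ x, x ^ n ∂ν = ∫ x, x ^ n ∂ν') : ν = ν' := by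
  set S := {z : ℂ | z.re ∈ interior (integrableExpSet id ν) ∩ interior (integrableExpSet id ν')}
  have hS : IsPreconnected S :=
    ((convex_integrableExpSet.interior.inter convex_integrableExpSet.interior).linear_preimage
      Complex.reLm).isPreconnected
  have hF : AnalyticOnNhd ℂ (complexMGF id ν) S := analyticOnNhd_complexMGF.mono fun z hz ↦ hz.1
  have hG : AnalyticOnNhd ℂ (complexMGF id ν') S := analyticOnNhd_complexMGF.mono fun z hz ↦ hz.2
  have h0 : (0 : ℂ) ∈ S := ⟨hν, hν'⟩
  have hnear : complexMGF id ν =ᶠ[𝓝 0] complexMGF id ν' := by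
    refine (hF 0 h0).eventuallyEq_of_iteratedDeriv_eq (hG 0 h0) fun n ↦ ?_
    rw [iteratedDeriv_complexMGF h0.1, iteratedDeriv_complexMGF h0.2]
    simp only [zero_mul, Complex.exp_zero, mul_one, id_eq]
    exact_mod_cast congrArg Complex.ofReal (hmom n)
  have hstrip := hF.eqOn_of_preconnected_of_eventuallyEq hG hS h0 hnear
  refine Measure.ext_of_charFun (funext fun t ↦ ?_)
  rw [← complexMGF_id_mul_I, ← complexMGF_id_mul_I]
  exact hstrip (by simpa [S] using h0)

section WithDensityOfReal

variable {α : Type*} [MeasurableSpace α] {μ : Measure α} {f : α → ℝ}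

theorem integrable_withDensity_ofReal_iff (hf : AEMeasurable f μ) (hf0 : 0 ≤ᵐ[μ] f)
    {g : α → ℝ} :
    Integrable g (μ.withDensity fun x ↦ ENNReal.ofReal (f x)) ↔
      Integrable (fun x ↦ f x * g x) μ := by
  rw [integrable_withDensity_iff_integrable_smul₀' hf.ennreal_ofReal
    (ae_of_all _ fun _ ↦ ENNReal.ofReal_lt_top)]
  refine integrable_congr ?_
  filter_upwards [hf0] with x hx
  simp [ENNReal.toReal_ofReal hx]

theorem integral_withDensity_ofReal (hf : AEMeasurable f μ) (hf0 : 0 ≤ᵐ[μ] f) (g : α → ℝ) :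
    ∫ x, g x ∂μ.withDensity (fun x ↦ ENNReal.ofReal (f x)) = ∫ x, f x * g x ∂μ := by
  rw [integral_withDensity_eq_integral_toReal_smul₀ hf.ennreal_ofReal
    (ae_of_all _ fun _ ↦ ENNReal.ofReal_lt_top)]
  refine integral_congr_ae ?_
  filter_upwards [hf0] with x hx
  simp [ENNReal.toReal_ofReal hx]

theorem ae_eq_of_withDensity_ofReal_eq {g : α → ℝ} (hf : Integrable f μ) (hg : AEMeasurable g μ)
    (hf0 : 0 ≤ᵐ[μ] f) (hg0 : 0 ≤ᵐ[μ] g)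
    (h : μ.withDensity (fun x ↦ ENNReal.ofReal (f x)) =
      μ.withDensity fun x ↦ ENNReal.ofReal (g x)) :
    f =ᵐ[μ] g := by
  have hfi : ∫⁻ x, ENNReal.ofReal (f x) ∂μ ≠ ⊤ :=
    (lintegral_ofReal_ne_top_iff_integrable hf.1 hf0).mpr hf
  rw [withDensity_eq_iff hf.1.aemeasurable.ennreal_ofReal hg.ennreal_ofReal hfi] at h
  filter_upwards [h, hf0, hg0] with x hx hfx hgx
  exact (ENNReal.ofReal_eq_ofReal_iff hfx hgx).mp hx

end WithDensityOfReal

section ExponentialMoments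

variable {μ : Measure ℝ} {δ : ℝ} {f : ℝ → ℝ}

theorem memLp_two_exp_half_mul_abs (hexp : Integrable (fun x ↦ exp (δ * |x|)) μ) :
    MemLp (fun x ↦ exp (δ / 2 * |x|)) 2 μ := by
  refine (memLp_two_iff_integrable_sq (by fun_prop)).mpr (hexp.congr (ae_of_all _ fun x ↦ ?_))
  simp only [← exp_nat_mul]
  ring_nf

theorem integrable_mul_exp_mul_of_abs_le (hexp : Integrable (fun x ↦ exp (δ * |x|)) μ)
    (hf : MemLp f 2 μ) {t : ℝ} (ht : |t| ≤ δ / 2) :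
    Integrable (fun x ↦ f x * exp (t * x)) μ := by
  have hdom : Integrable (fun x ↦ f x * exp (δ / 2 * |x|)) μ :=
    hf.integrable_mul (memLp_two_exp_half_mul_abs hexp)
  refine hdom.mono (hf.1.mul (by fun_prop)) (ae_of_all _ fun x ↦ ?_)
  have hexp_le : exp (t * x) ≤ exp (δ / 2 * |x|) :=
    exp_le_exp.mpr <| (le_abs_self _).trans <| by
      rw [abs_mul]; exact mul_le_mul_of_nonneg_right ht (abs_nonneg x)
  simp only [norm_mul, norm_eq_abs, abs_exp]
  gcongr

theorem zero_mem_interior_integrableExpSet_withDensity (hδ : 0 < δ)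
    (hexp : Integrable (fun x ↦ exp (δ * |x|)) μ) (hf : MemLp f 2 μ) (hf0 : 0 ≤ᵐ[μ] f) :
    0 ∈ interior (integrableExpSet id (μ.withDensity fun x ↦ ENNReal.ofReal (f x))) := by
  refine mem_interior_iff_mem_nhds.mpr <| mem_of_superset
    (Ioo_mem_nhds (a := -(δ / 2)) (b := δ / 2) (by linarith) (by linarith)) fun t ht ↦ ?_
  rw [integrableExpSet, Set.mem_ofPred_eq,
    integrable_withDensity_ofReal_iff hf.1.aemeasurable hf0]
  exact integrable_mul_exp_mul_of_abs_le hexp hf (abs_le.mpr ⟨ht.1.le, ht.2.le⟩)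

end ExponentialMoments

theorem density_determined_by_moments
    (μ : Measure ℝ) (δ : ℝ) (hδ : 0 < δ)
    (hexp : Integrable (fun x => Real.exp (δ * |x|)) μ)
    (f g : ℝ → ℝ)
    (hf : MemLp f 2 μ) (hg : MemLp g 2 μ)
    (hf0 : 0 ≤ᵐ[μ] f) (hg0 : 0 ≤ᵐ[μ] g)
    (hmom : ∀ n : ℕ, ∫ x, x ^ n * f x ∂μ = ∫ x, x ^ n * g x ∂μ) :
    f =ᵐ[μ] g := by
  have integrable_of_memLp : ∀ φ : ℝ → ℝ, MemLp φ 2 μ → Integrable φ μ := fun φ hφ ↦ by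
    simpa using integrable_mul_exp_mul_of_abs_le hexp hφ (t := 0) (by rw [abs_zero]; positivity)
  have hfi := integrable_of_memLp f hf
  have := isFiniteMeasure_withDensity_ofReal hfi.2
  have := isFiniteMeasure_withDensity_ofReal (integrable_of_memLp g hg).2
  refine ae_eq_of_withDensity_ofReal_eq hfi hg.1.aemeasurable hf0 hg0 <|
    Measure.ext_of_moments (zero_mem_interior_integrableExpSet_withDensity hδ hexp hf hf0)
      (zero_mem_interior_integrableExpSet_withDensity hδ hexp hg hg0) fun n ↦ ?_
  rw [integral_withDensity_ofReal hf.1.aemeasurable hf0,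
    integral_withDensity_ofReal hg.1.aemeasurable hg0]
  simpa only [mul_comm] using hmom n
end

section
/- The probabilist Hermite polynomials satisfy the addition formula: for all real a with a² ≤ 1 and all real x, y, Hₙ(a x + √(1−a²) y) = Σ_{m=0}^n (n choose m) a^m (1−a²)^{(n−m)/2} H_m(x) H_{n−m}(y). -/
open Real

noncomputable def H : ℕ → ℝ → ℝ
  | 0, _ => 1
  | 1, x => x
  | (n + 2), x => x * H (n + 1) x - (n + 1) * H n x

/-!
Call `u` a solution of the Hermite recurrence with parameters `(p, α)` if
`u (n + 1) = p * u n - α * n * u (n - 1)`. Then `n ↦ Hₙ(z)` is the solution for `(z, 1)` with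
`u 0 = 1`, and a solution is determined by `u 0`. For exponential generating functions the
recurrence reads `U' = (p - α t) U`, so a product of two solutions solves it for the summed
parameters. On sequences: the binomial convolution of solutions for `(p, α)` and `(q, β)` solves
the recurrence for `(p + q, α + β)`, because the shift acts on a convolution by the Leibniz rule,
while `u ↦ n * u (n - 1)` (multiplication by `t`) may be applied to either factor. Since
`aⁿ Hₙ(x)` and `bⁿ Hₙ(y)` solve it for `(a x, a²)` and `(b y, b²)`, their convolution is
`Hₙ(a x + b y)` when `a² + b² = 1`.
-/

open Finset

section BinomialConv

variable {R : Type*} [CommSemiring R]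

def binomialConv (u v : ℕ → R) (n : ℕ) : R :=
  ∑ p ∈ antidiagonal n, (n.choose p.1 : R) * (u p.1 * v p.2)

theorem binomialConv_zero (u v : ℕ → R) : binomialConv u v 0 = u 0 * v 0 := by
  simp [binomialConv]

theorem binomialConv_comm (u v : ℕ → R) (n : ℕ) :
    binomialConv u v n = binomialConv v u n := by
  rw [binomialConv, ← Nat.sum_antidiagonal_swap]
  refine sum_congr rfl fun p hp => ?_
  rw [Nat.choose_symm_of_eq_add (mem_antidiagonal.mp hp).symm, mul_comm (u _)]
  rfl

theorem binomialConv_succ (u v : ℕ → R) (n : ℕ) :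
    binomialConv u v (n + 1)
      = binomialConv (fun m => u (m + 1)) v n + binomialConv u (fun k => v (k + 1)) n := by
  rw [binomialConv, sum_antidiagonal_choose_succ_mul (fun i j => u i * v j), add_comm]
  congr 1
  refine sum_congr rfl fun p hp => ?_
  rw [Nat.choose_symm_of_eq_add (mem_antidiagonal.mp hp).symm]

theorem binomialConv_natCast_mul_left (u v : ℕ → R) (n : ℕ) :
    binomialConv (fun m => (m : R) * u (m - 1)) v n = n * binomialConv u v (n - 1) := by
  cases n with
  | zero => simp [binomialConv]
  | succ n =>
    rw [binomialConv, Nat.sum_antidiagonal_succ, Nat.add_sub_cancel, binomialConv, mul_sum]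
    simp only [Nat.cast_zero, zero_mul, mul_zero, zero_add, Nat.add_sub_cancel]
    refine sum_congr rfl fun p _ => ?_
    have hchoose := congrArg (Nat.cast (R := R)) (Nat.add_one_mul_choose_eq n p.1)
    push_cast at hchoose ⊢
    calc _ = ((n + 1).choose (p.1 + 1) * (p.1 + 1) : R) * (u p.1 * v p.2) := by ring
      _ = _ := by rw [← hchoose, mul_assoc]

end BinomialConv

theorem binomialConv_mul_sub_mul_left {R : Type*} [CommRing R] (c d : R) (u u' v : ℕ → R)
    (n : ℕ) :
    binomialConv (fun m => c * u m - d * u' m) v n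
      = c * binomialConv u v n - d * binomialConv u' v n := by
  simp only [binomialConv, mul_sum, ← sum_sub_distrib]
  exact sum_congr rfl fun _ _ => by ring

-- At `n = 0` the truncated `u (n - 1)` is multiplied by `0`, so this reads `u 1 = p * u 0`.
def HermiteRecurrence {R : Type*} [CommRing R] (p α : R) (u : ℕ → R) : Prop :=
  ∀ n, u (n + 1) = p * u n - α * n * u (n - 1)

namespace HermiteRecurrence

variable {R : Type*} [CommRing R] {p q α β : R} {u v : ℕ → R}

theorem pow_mul (c : R) (hu : HermiteRecurrence p α u) :
    HermiteRecurrence (c * p) (c ^ 2 * α) (fun n => c ^ n * u n) := by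
  intro n
  cases n with
  | zero => simp [hu 0, mul_assoc]
  | succ n => simp only [hu (n + 1), Nat.add_sub_cancel]; ring

theorem binomialConv (hu : HermiteRecurrence p α u) (hv : HermiteRecurrence q β v) :
    HermiteRecurrence (p + q) (α + β) (binomialConv u v) := by
  intro n
  have hu' : (fun m => u (m + 1)) = fun m => p * u m - α * (m * u (m - 1)) :=
    funext fun m => by rw [hu m, mul_assoc]
  have hv' : (fun k => v (k + 1)) = fun k => q * v k - β * (k * v (k - 1)) :=
    funext fun k => by rw [hv k, mul_assoc]
  have hshift_left : _root_.binomialConv (fun m => u (m + 1)) v n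
      = p * _root_.binomialConv u v n - α * (n * _root_.binomialConv u v (n - 1)) := by
    rw [hu', binomialConv_mul_sub_mul_left, binomialConv_natCast_mul_left]
  have hshift_right : _root_.binomialConv u (fun k => v (k + 1)) n
      = q * _root_.binomialConv u v n - β * (n * _root_.binomialConv u v (n - 1)) := by
    rw [binomialConv_comm, hv', binomialConv_mul_sub_mul_left, binomialConv_natCast_mul_left,
      binomialConv_comm v, binomialConv_comm v]
  rw [binomialConv_succ, hshift_left, hshift_right]
  ring

theorem eq_of_zero (hu : HermiteRecurrence p α u) (hv : HermiteRecurrence p α v)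
    (h₀ : u 0 = v 0) : u = v := by
  suffices h : ∀ n, u n = v n ∧ u (n + 1) = v (n + 1) from funext fun n => (h n).1
  intro n
  induction n with
  | zero => exact ⟨h₀, by rw [hu 0, hv 0, h₀]⟩
  | succ n ih => exact ⟨ih.2, by rw [hu (n + 1), hv (n + 1), Nat.add_sub_cancel, ih.1, ih.2]⟩

end HermiteRecurrence

theorem hermiteRecurrence_H (z : ℝ) : HermiteRecurrence z 1 (fun n => H n z) := by
  intro n
  cases n with
  | zero => simp [H]
  | succ n => simp only [H, Nat.add_sub_cancel, Nat.cast_add_one, one_mul]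

theorem H_add_eq_binomialConv {a b : ℝ} (hab : a ^ 2 + b ^ 2 = 1) (x y : ℝ) :
    (fun n => H n (a * x + b * y))
      = binomialConv (fun m => a ^ m * H m x) (fun k => b ^ k * H k y) := by
  have hconv := ((hermiteRecurrence_H x).pow_mul a).binomialConv ((hermiteRecurrence_H y).pow_mul b)
  rw [mul_one, mul_one, hab] at hconv
  exact (hermiteRecurrence_H _).eq_of_zero hconv (by simp [H, binomialConv_zero])

theorem hermite_addition_formula (n : ℕ) (a x y : ℝ) (ha : a ^ 2 ≤ 1) :
    H n (a * x + Real.sqrt (1 - a ^ 2) * y)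
      = ∑ m ∈ Finset.range (n + 1),
          (n.choose m : ℝ) * a ^ m *
            (1 - a ^ 2) ^ (((n : ℝ) - m) / 2) * H m x * H (n - m) y := by
  have hnonneg : 0 ≤ 1 - a ^ 2 := sub_nonneg.mpr ha
  have hab : a ^ 2 + √(1 - a ^ 2) ^ 2 = 1 := by rw [sq_sqrt hnonneg]; ring
  rw [congrFun (H_add_eq_binomialConv hab x y) n, binomialConv,
    Nat.sum_antidiagonal_eq_sum_range_succ_mk]
  refine sum_congr rfl fun m hm => ?_
  have hmn : m ≤ n := Nat.lt_succ_iff.mp (mem_range.mp hm)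
  rw [rpow_div_two_eq_sqrt _ hnonneg, ← Nat.cast_sub hmn, rpow_natCast]
  ring
end

section
/- Let g(x; y, ρ) = (1/√(2π(1−ρ²))) exp(−(x−ρy)²/(2(1−ρ²))) for |ρ| < 1. Then for every n ≥ 0 and every real y, ∫_{−∞}^{∞} Hₙ(x) g(x; y, ρ) dx = ρⁿ Hₙ(y). -/
/-!
`H` is Mathlib's `Polynomial.hermite`, and `hermite (n + 1)' = (n + 1) • hermite n`. Gaussian
integration by parts, `∫ (x - μ) f dN(μ, v) = v ∫ f' dN(μ, v)`, applied to `f = Hₙ₊₁` turns the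
three-term recurrence of the `Hₙ` into the recurrence
`Iₙ₊₂ = μ Iₙ₊₁ - (1 - v)(n + 1) Iₙ` for `Iₙ = ∫ Hₙ dN(μ, v)`. For `μ = ρy`, `v = 1 - ρ²` this is
`Iₙ₊₂ = ρy Iₙ₊₁ - ρ²(n + 1) Iₙ`, which `ρⁿ Hₙ(y)` also satisfies.
-/

open Real MeasureTheory

open Polynomial ProbabilityTheory
open scoped NNReal

namespace Polynomial

theorem derivative_hermite_succ (n : ℕ) :
    derivative (hermite (n + 1)) = ((n : ℤ[X]) + 1) * hermite n := by
  induction n with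
  | zero => simp
  | succ n ih =>
    rw [hermite_succ (n + 1), derivative_sub, derivative_mul, derivative_X, ih, derivative_mul]
    simp only [derivative_add, derivative_natCast, derivative_one]
    push_cast
    linear_combination -((n : ℤ[X]) + 1) * hermite_succ n

theorem hermite_succ_succ (n : ℕ) :
    hermite (n + 2) = X * hermite (n + 1) - ((n : ℤ[X]) + 1) * hermite n := by
  rw [hermite_succ, derivative_hermite_succ]

end Polynomial

theorem H_eq_aeval_hermite (n : ℕ) (x : ℝ) : H n x = aeval x (hermite n) := by
  induction n using Nat.twoStepInduction with
  | zero => simp [H]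
  | one => simp [H]
  | more n ih₁ ih₂ =>
    rw [H, hermite_succ_succ, ih₁, ih₂]
    simp

theorem hasDerivAt_gaussianPDFReal (μ : ℝ) (v : ℝ≥0) (x : ℝ) :
    HasDerivAt (gaussianPDFReal μ v) (-(x - μ) / v * gaussianPDFReal μ v x) x := by
  have h := ((((hasDerivAt_id' x).sub_const μ).fun_pow 2).fun_neg.div_const
    (2 * (v : ℝ))).exp.const_mul (√(2 * π * v))⁻¹
  refine h.congr_deriv ?_
  rw [gaussianPDFReal_def]
  norm_num
  ring

section Gaussian

variable {μ : ℝ} {v : ℝ≥0}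

theorem integrable_aeval_gaussianReal {R : Type*} [CommSemiring R] [Algebra R ℝ] (p : R[X]) :
    Integrable (fun x ↦ aeval x p) (gaussianReal μ v) := by
  induction p using Polynomial.induction_on' with
  | add p q hp hq =>
    simp only [map_add]
    exact hp.add hq
  | monomial k c =>
    simpa [Algebra.smul_def] using
      (integrable_pow_of_mem_interior_integrableExpSet (X := fun x ↦ x) (by simp) k).const_mul
        (algebraMap R ℝ c)

theorem MeasureTheory.Integrable.mul_gaussianPDFReal {f : ℝ → ℝ} (hv : v ≠ 0)
    (hf : Integrable f (gaussianReal μ v)) :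
    Integrable (fun x ↦ f x * gaussianPDFReal μ v x) := by
  rw [gaussianReal_of_var_ne_zero _ hv, integrable_withDensity_iff_integrable_smul'
    (measurable_gaussianPDF μ v) (ae_of_all _ fun _ ↦ gaussianPDF_lt_top)] at hf
  simpa [toReal_gaussianPDF, mul_comm] using hf

/-- Stein's lemma. -/
theorem integral_sub_mul_gaussianReal {f f' : ℝ → ℝ} (hf : ∀ x, HasDerivAt f (f' x) x)
    (hf_int : Integrable f (gaussianReal μ v)) (hf'_int : Integrable f' (gaussianReal μ v))
    (hxf_int : Integrable (fun x ↦ (x - μ) * f x) (gaussianReal μ v)) :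
    ∫ x, (x - μ) * f x ∂gaussianReal μ v = v * ∫ x, f' x ∂gaussianReal μ v := by
  rcases eq_or_ne v 0 with rfl | hv
  · simp [gaussianReal_zero_var]
  have hxf_int' : Integrable (fun x ↦ f x * (-(x - μ) / v * gaussianPDFReal μ v x)) := by
    refine ((hxf_int.mul_gaussianPDFReal hv).const_mul (-(v : ℝ)⁻¹)).congr (ae_of_all _ fun x ↦ ?_)
    ring
  have ibp := integral_mul_deriv_eq_deriv_mul_of_integrable (fun x _ ↦ hf x)
    (fun x _ ↦ hasDerivAt_gaussianPDFReal μ v x) hxf_int' (hf'_int.mul_gaussianPDFReal hv)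
    (hf_int.mul_gaussianPDFReal hv)
  have hv₀ : (v : ℝ) ≠ 0 := mod_cast hv
  simp only [integral_gaussianReal_eq_integral_smul hv, smul_eq_mul]
  calc ∫ x, gaussianPDFReal μ v x * ((x - μ) * f x)
      = -v * ∫ x, f x * (-(x - μ) / v * gaussianPDFReal μ v x) := by
        rw [← integral_const_mul]
        congr 1 with x
        field_simp
    _ = v * ∫ x, gaussianPDFReal μ v x * f' x := by
        simp only [ibp, mul_comm (gaussianPDFReal μ v _)]
        ring

theorem integral_hermite_add_two_gaussianReal (n : ℕ) :
    ∫ x, aeval x (hermite (n + 2)) ∂gaussianReal μ v =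
      μ * ∫ x, aeval x (hermite (n + 1)) ∂gaussianReal μ v
        - (1 - v) * (n + 1) * ∫ x, aeval x (hermite n) ∂gaussianReal μ v := by
  have hint (p : ℤ[X]) := integrable_aeval_gaussianReal (μ := μ) (v := v) p
  have hxh : Integrable (fun x ↦ (x - μ) * aeval x (hermite (n + 1))) (gaussianReal μ v) :=
    ((hint (X * hermite (n + 1))).sub ((hint (hermite (n + 1))).const_mul μ)).congr
      (ae_of_all _ fun x ↦ by simp only [Pi.sub_apply, map_mul, aeval_X]; ring)
  have stein := integral_sub_mul_gaussianReal (f' := fun x ↦ (n + 1) * aeval x (hermite n))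
    (fun x ↦ ((hermite (n + 1)).hasDerivAt_aeval x).congr_deriv
      (by rw [derivative_hermite_succ, map_mul]; simp))
    (hint _) ((hint _).const_mul _) hxh
  have hsplit : ∀ x, aeval x (hermite (n + 2)) = (x - μ) * aeval x (hermite (n + 1))
      + μ * aeval x (hermite (n + 1)) - (n + 1) * aeval x (hermite n) := by
    intro x
    rw [hermite_succ_succ]
    simp only [map_sub, map_mul, map_add, map_natCast, map_one, aeval_X]
    ring
  rw [integral_const_mul] at stein
  simp only [hsplit]
  rw [integral_sub, integral_add, integral_const_mul, integral_const_mul, stein]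
  · ring
  exacts [hxh, (hint _).const_mul μ, hxh.add ((hint _).const_mul μ), (hint _).const_mul _]

theorem integral_hermite_gaussianReal {ρ : ℝ} (y : ℝ) (hv : (v : ℝ) = 1 - ρ ^ 2) (n : ℕ) :
    ∫ x, aeval x (hermite n) ∂gaussianReal (ρ * y) v = ρ ^ n * aeval y (hermite n) := by
  induction n using Nat.twoStepInduction with
  | zero => simp
  | one => simp [integral_id_gaussianReal]
  | more n ih₁ ih₂ =>
    rw [integral_hermite_add_two_gaussianReal, ih₁, ih₂, hv, hermite_succ_succ]
    simp only [map_sub, map_mul, map_add, map_natCast, map_one, aeval_X]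
    ring

end Gaussian

theorem hermite_gaussian_integral (ρ : ℝ) (hρ : |ρ| < 1) (n : ℕ) (y : ℝ) :
    ∫ x : ℝ, H n x *
        ((1 / Real.sqrt (2 * π * (1 - ρ ^ 2))) *
          Real.exp (-(x - ρ * y) ^ 2 / (2 * (1 - ρ ^ 2))))
      = ρ ^ n * H n y := by
  have hρ₂ : 0 < 1 - ρ ^ 2 := by nlinarith [abs_nonneg ρ, sq_abs ρ]
  obtain ⟨v, hv⟩ : ∃ v : ℝ≥0, (v : ℝ) = 1 - ρ ^ 2 := ⟨⟨_, hρ₂.le⟩, rfl⟩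
  have hv₀ : v ≠ 0 := NNReal.coe_ne_zero.mp (hv ▸ hρ₂.ne')
  rw [H_eq_aeval_hermite, ← integral_hermite_gaussianReal y hv,
    integral_gaussianReal_eq_integral_smul hv₀]
  congr 1 with x
  rw [H_eq_aeval_hermite, gaussianPDFReal, hv, smul_eq_mul, one_div]
  ring
end
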